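/- arXiv:1612.00916 — 2 statements merged into one kernel-verified Lean document; each statement's English description precedes it below -/
import Mathlib

section
/- The unique fixed point of the generalized Bellman operator Lv = (I − γP_♯)^{-1} r_σ + γ(I − γP_♯)^{-1} P_⊥ v equals the value function v_σ = (I − γP_σ)^{-1} r_σ (consistency of options-based policy evaluation in the gating model). -/
open Matrix

lemma aux_unit_det {n : ℕ} (P : Matrix (Fin n) (Fin n) ℝ)
    (hpos : ∀ i j, 0 ≤ P i j) (hrow : ∀ i, ∑ j, P i j ≤ 1)
    (γ : ℝ) (hγ0 : 0 ≤ γ) (hγ1 : γ < 1) :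
    IsUnit (1 - γ • P).det := by
  refine (Ne.isUnit (det_ne_zero_of_sum_row_lt_diag ?_))
  intro k
  have hdle : P k k ≤ ∑ j, P k j :=
    Finset.single_le_sum (fun j _ => hpos k j) (Finset.mem_univ k)
  have h1 : γ * ∑ j, P k j < 1 := by
    rcases eq_or_lt_of_le hγ0 with h | h
    · simp [← h]
    · calc γ * ∑ j, P k j ≤ γ * 1 := by
            exact mul_le_mul_of_nonneg_left (hrow k) hγ0
        _ < 1 := by linarith
  have hentry : ∀ j, j ≠ k → (1 - γ • P) k j = -(γ * P k j) := by
    intro j hj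
    simp [Matrix.sub_apply, Matrix.one_apply, Ne.symm hj]
  have hdiag : (1 - γ • P) k k = 1 - γ * P k k := by
    simp [Matrix.sub_apply, Matrix.one_apply]
  have hdiagpos : 0 < 1 - γ * P k k := by
    have : γ * P k k ≤ γ * ∑ j, P k j :=
      mul_le_mul_of_nonneg_left hdle hγ0
    linarith
  have hsum : ∑ j ∈ Finset.univ.erase k, ‖(1 - γ • P) k j‖
      = γ * ∑ j ∈ Finset.univ.erase k, P k j := by
    rw [Finset.mul_sum]
    refine Finset.sum_congr rfl (fun j hj => ?_)
    rw [hentry j (Finset.ne_of_mem_erase hj), norm_neg,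
      Real.norm_of_nonneg (mul_nonneg hγ0 (hpos k j))]
  rw [hsum, hdiag, Real.norm_of_nonneg hdiagpos.le]
  have hsplit : ∑ j ∈ Finset.univ.erase k, P k j = (∑ j, P k j) - P k k := by
    rw [Finset.sum_erase_eq_sub (Finset.mem_univ k)]
  rw [hsplit]
  nlinarith

theorem stmt6 {n : ℕ} (Pσ Psharp Pbot : Matrix (Fin n) (Fin n) ℝ)
    (hσpos : ∀ i j, 0 ≤ Pσ i j) (hσrow : ∀ i, ∑ j, Pσ i j = 1)
    (hsharp : ∀ i j, 0 ≤ Psharp i j) (hbot : ∀ i j, 0 ≤ Pbot i j)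
    (hsplit : Psharp + Pbot = Pσ)
    (γ : ℝ) (hγ0 : 0 ≤ γ) (hγ1 : γ < 1)
    (r : Fin n → ℝ)
    (L : (Fin n → ℝ) → (Fin n → ℝ))
    (hL : ∀ v, L v = (1 - γ • Psharp)⁻¹ *ᵥ r
        + γ • (((1 - γ • Psharp)⁻¹ * Pbot) *ᵥ v)) :
    L ((1 - γ • Pσ)⁻¹ *ᵥ r) = (1 - γ • Pσ)⁻¹ *ᵥ r ∧
    ∀ v, L v = v → v = (1 - γ • Pσ)⁻¹ *ᵥ r := by
  set A := 1 - γ • Psharp with hA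
  set B := 1 - γ • Pσ with hB
  have hBunit : IsUnit B.det :=
    aux_unit_det Pσ hσpos (fun i => (hσrow i).le) γ hγ0 hγ1
  have hshrow : ∀ i, ∑ j, Psharp i j ≤ 1 := by
    intro i
    have : ∑ j, Psharp i j ≤ ∑ j, Pσ i j := by
      refine Finset.sum_le_sum (fun j _ => ?_)
      have := congrFun (congrFun hsplit i) j
      simp only [Matrix.add_apply] at this
      linarith [hbot i j]
    rw [hσrow i] at this; exact this
  have hAunit : IsUnit A.det := aux_unit_det Psharp hsharp hshrow γ hγ0 hγ1
  have hAB : A - γ • Pbot = B := by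
    rw [hA, hB, ← hsplit, smul_add, sub_sub]
  have hBv : B *ᵥ (B⁻¹ *ᵥ r) = r := by
    rw [Matrix.mulVec_mulVec, Matrix.mul_nonsing_inv B hBunit, Matrix.one_mulVec]
  -- key: for any v, L v = v ↔ B *ᵥ v = r (one direction each way)
  have hAL : ∀ v, A *ᵥ L v = r + γ • (Pbot *ᵥ v) := by
    intro v
    rw [hL v, Matrix.mulVec_add, Matrix.mulVec_mulVec,
      Matrix.mul_nonsing_inv A hAunit, Matrix.one_mulVec,
      Matrix.mulVec_smul, Matrix.mulVec_mulVec, ← Matrix.mul_assoc,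
      Matrix.mul_nonsing_inv A hAunit, Matrix.one_mul]
  have hAv : ∀ v, B *ᵥ v = r → A *ᵥ v = r + γ • (Pbot *ᵥ v) := by
    intro v hv
    have : A *ᵥ v = (B + γ • Pbot) *ᵥ v := by rw [← hAB, sub_add_cancel]
    rw [this, Matrix.add_mulVec, hv, Matrix.smul_mulVec]
  constructor
  · set v := B⁻¹ *ᵥ r with hv
    have h1 : A *ᵥ L v = A *ᵥ v := by rw [hAL v, hAv v hBv]
    have h2 : A⁻¹ *ᵥ (A *ᵥ L v) = A⁻¹ *ᵥ (A *ᵥ v) := by rw [h1]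
    rwa [Matrix.mulVec_mulVec, Matrix.mulVec_mulVec,
      Matrix.nonsing_inv_mul A hAunit, Matrix.one_mulVec, Matrix.one_mulVec] at h2
  · intro v hfix
    have h1 : A *ᵥ v = r + γ • (Pbot *ᵥ v) := by have := hAL v; rwa [hfix] at this
    have h2 : B *ᵥ v = r := by
      rw [← hAB, Matrix.sub_mulVec, h1, Matrix.smul_mulVec]; abel
    rw [← h2, Matrix.mulVec_mulVec, Matrix.nonsing_inv_mul B hBunit, Matrix.one_mulVec]
end

section
/- (Comparison of regular splittings / 'predict further, plan faster') If A = M − N = M̃ − Ñ are two regular splittings of the same matrix A with A^{-1} ≥ 0 entrywise and 0 ≤ Ñ ≤ N entrywise, then ρ(M̃^{-1}Ñ) ≤ ρ(M^{-1}N) < 1. -/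
open Matrix

/-- The spectral radius of a real matrix: the supremum of the moduli of its
complex eigenvalues (elements of the spectrum of the complexified matrix). -/
noncomputable def specRad {m : Type*} [Fintype m] [DecidableEq m]
    (A : Matrix m m ℝ) : ℝ :=
  sSup {x : ℝ | ∃ μ : ℂ, μ ∈ spectrum ℂ (A.map (algebraMap ℝ ℂ)) ∧ x = ‖μ‖}

/-!
Write `B = A⁻¹N`. Since `M = A + N`, the iteration matrix is `T = M⁻¹N = (1 + B)⁻¹B`, and `B ≥ 0`.
An eigenvalue `μ` of `B` yields the eigenvalue `μ / (1 + μ)` of `T`, so `ρ(B) / (1 + ρ(B)) ≤ ρ(T)`.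
Conversely, if `Tv = τv` then `x = |v|` satisfies `|τ| x ≤ T x`, hence `|τ| (x + Bx) ≤ Bx`; this
forces `|τ| < 1` and `(|τ| / (1 - |τ|)) x ≤ Bx`, so the Collatz–Wielandt bound
`s x ≤ S x → s ≤ ρ(S)` (from Gelfand's formula) gives `ρ(T) ≤ ρ(B) / (1 + ρ(B)) < 1`.
The same bound shows `ρ(A⁻¹Ñ) ≤ ρ(A⁻¹N)`, and `t ↦ t / (1 + t)` is increasing.
-/

open Filter

attribute [local instance] Matrix.linftyOpNormedRing Matrix.linftyOpNormedAlgebra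

namespace Matrix

section OrderedSemiring

variable {l n o R : Type*} [Fintype n] [Semiring R] [PartialOrder R] [IsOrderedRing R]

theorem mul_apply_nonneg {P : Matrix l n R} {Q : Matrix n o R} (hP : ∀ i j, 0 ≤ P i j)
    (hQ : ∀ i j, 0 ≤ Q i j) (i : l) (j : o) : 0 ≤ (P * Q) i j :=
  Finset.sum_nonneg fun k _ => mul_nonneg (hP i k) (hQ k j)

theorem mulVec_mono_of_nonneg {S : Matrix l n R} (hS : ∀ i j, 0 ≤ S i j) {x y : n → R}
    (hxy : x ≤ y) : S *ᵥ x ≤ S *ᵥ y := fun i =>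
  Finset.sum_le_sum fun j _ => mul_le_mul_of_nonneg_left (hxy j) (hS i j)

theorem mulVec_le_mulVec_of_le {S S' : Matrix l n R} (hle : ∀ i j, S' i j ≤ S i j) {x : n → R}
    (hx : 0 ≤ x) : S' *ᵥ x ≤ S *ᵥ x := fun i =>
  Finset.sum_le_sum fun j _ => mul_le_mul_of_nonneg_right (hle i j) (hx j)

end OrderedSemiring

end Matrix

variable {m : Type*} [Fintype m]

theorem pi_norm_le_norm_of_nonneg_of_le {x y : m → ℝ} (hx : 0 ≤ x) (hxy : x ≤ y) : ‖x‖ ≤ ‖y‖ :=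
  (pi_norm_le_iff_of_nonneg (norm_nonneg y)).2 fun i => by
    rw [Real.norm_of_nonneg (hx i)]
    exact (hxy i).trans ((le_abs_self _).trans (norm_le_pi_norm y i))

variable [DecidableEq m]

namespace Matrix

theorem mem_spectrum_iff_exists_mulVec_eq_smul {K : Type*} [Field K] (S : Matrix m m K) (μ : K) :
    μ ∈ spectrum K S ↔ ∃ v ≠ 0, S *ᵥ v = μ • v := by
  rw [← spectrum_toLin', ← Module.End.hasEigenvalue_iff_mem_spectrum]
  constructor
  · intro h
    obtain ⟨v, hv, hv0⟩ := h.exists_hasEigenvector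
    exact ⟨v, hv0, Module.End.mem_eigenspace_iff.1 hv⟩
  · rintro ⟨v, hv0, hv⟩
    exact Module.End.hasEigenvalue_of_hasEigenvector ⟨Module.End.mem_eigenspace_iff.2 hv, hv0⟩

theorem pow_smul_le_pow_mulVec {S : Matrix m m ℝ} (hS : ∀ i j, 0 ≤ S i j) {x : m → ℝ} {s : ℝ}
    (hs : 0 ≤ s) (hsx : s • x ≤ S *ᵥ x) (k : ℕ) : s ^ k • x ≤ S ^ k *ᵥ x := by
  induction k with
  | zero => simp
  | succ k ih =>
    calc s ^ (k + 1) • x = s • s ^ k • x := by rw [pow_succ', mul_smul]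
      _ ≤ s • (S ^ k *ᵥ x) := smul_le_smul_of_nonneg_left ih hs
      _ = S ^ k *ᵥ (s • x) := (mulVec_smul _ _ _).symm
      _ ≤ S ^ k *ᵥ (S *ᵥ x) := mulVec_mono_of_nonneg (pow_apply_nonneg hS k) hsx
      _ = S ^ (k + 1) *ᵥ x := by rw [mulVec_mulVec, pow_succ]

theorem norm_map_algebraMap (S : Matrix m m ℝ) : ‖S.map (algebraMap ℝ ℂ)‖ = ‖S‖ := by
  simp only [linfty_opNorm_def, map_apply, ← norm_toNNReal, norm_algebraMap']

theorem one_add_inv_mul_mul_inv_mul {A M N : Matrix m m ℝ} (hA : IsUnit A) (hM : IsUnit M)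
    (hMN : A = M - N) : (1 + A⁻¹ * N) * (M⁻¹ * N) = A⁻¹ * N := by
  rw [isUnit_iff_isUnit_det] at hA hM
  have hAM : 1 + A⁻¹ * N = A⁻¹ * M := by
    rw [sub_eq_iff_eq_add.1 hMN.symm, mul_add, nonsing_inv_mul _ hA]
  rw [hAM, mul_assoc, ← mul_assoc M, mul_nonsing_inv _ hM, one_mul]

theorem inv_mul_mul_one_add_inv_mul {A M N : Matrix m m ℝ} (hA : IsUnit A) (hM : IsUnit M)
    (hMN : A = M - N) : (M⁻¹ * N) * (1 + A⁻¹ * N) = A⁻¹ * N := by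
  rw [isUnit_iff_isUnit_det] at hA hM
  have hAM : 1 + A⁻¹ * N = A⁻¹ * M := by
    rw [sub_eq_iff_eq_add.1 hMN.symm, mul_add, nonsing_inv_mul _ hA]
  have hcomm : N * (A⁻¹ * M) = M * (A⁻¹ * N) := by
    rw [← hAM, sub_eq_iff_eq_add.1 hMN.symm]
    simp only [mul_add, add_mul, mul_one, ← mul_assoc, mul_nonsing_inv _ hA, one_mul]
  rw [hAM, mul_assoc, hcomm, ← mul_assoc, nonsing_inv_mul _ hM, one_mul]

end Matrix

theorem finite_norms_spectrum (S : Matrix m m ℝ) :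
    {x : ℝ | ∃ μ : ℂ, μ ∈ spectrum ℂ (S.map (algebraMap ℝ ℂ)) ∧ x = ‖μ‖}.Finite :=
  ((finite_spectrum _).image (‖·‖)).subset fun _ ⟨μ, hμ, hx⟩ => ⟨μ, hμ, hx.symm⟩

theorem norm_le_specRad {S : Matrix m m ℝ} {μ : ℂ}
    (hμ : μ ∈ spectrum ℂ (S.map (algebraMap ℝ ℂ))) : ‖μ‖ ≤ specRad S :=
  le_csSup (finite_norms_spectrum S).bddAbove ⟨μ, hμ, rfl⟩

theorem specRad_le {S : Matrix m m ℝ} {c : ℝ} (hc : 0 ≤ c)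
    (h : ∀ μ ∈ spectrum ℂ (S.map (algebraMap ℝ ℂ)), ‖μ‖ ≤ c) : specRad S ≤ c :=
  Real.sSup_le (by rintro _ ⟨μ, hμ, rfl⟩; exact h μ hμ) hc

theorem specRad_nonneg (S : Matrix m m ℝ) : 0 ≤ specRad S :=
  Real.sSup_nonneg (by rintro _ ⟨μ, -, rfl⟩; exact norm_nonneg μ)

theorem exists_norm_eq_specRad [Nonempty m] (S : Matrix m m ℝ) :
    ∃ μ ∈ spectrum ℂ (S.map (algebraMap ℝ ℂ)), ‖μ‖ = specRad S := by
  obtain ⟨μ, hμ⟩ := spectrum.nonempty (S.map (algebraMap ℝ ℂ))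
  obtain ⟨ν, hν, h⟩ :
      specRad S ∈ {x : ℝ | ∃ μ : ℂ, μ ∈ spectrum ℂ (S.map (algebraMap ℝ ℂ)) ∧ x = ‖μ‖} :=
    Set.Nonempty.csSup_mem ⟨_, μ, hμ, rfl⟩ (finite_norms_spectrum S)
  exact ⟨ν, hν, h.symm⟩

theorem spectralRadius_le_specRad (S : Matrix m m ℝ) :
    spectralRadius ℂ (S.map (algebraMap ℝ ℂ)) ≤ ENNReal.ofReal (specRad S) :=
  iSup₂_le fun μ hμ => by
    rw [← ENNReal.ofReal_coe_nnreal, coe_nnnorm]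
    exact ENNReal.ofReal_le_ofReal (norm_le_specRad hμ)

theorem le_specRad_of_smul_le_mulVec {S : Matrix m m ℝ} (hS : ∀ i j, 0 ≤ S i j) {x : m → ℝ}
    (hx : 0 ≤ x) (hx0 : x ≠ 0) {s : ℝ} (hs : 0 ≤ s) (hsx : s • x ≤ S *ᵥ x) : s ≤ specRad S := by
  have hpow (k : ℕ) : s ^ k ≤ ‖S.map (algebraMap ℝ ℂ) ^ k‖ := by
    have hsk : s ^ k * ‖x‖ ≤ ‖S ^ k‖ * ‖x‖ :=
      calc s ^ k * ‖x‖ = ‖s ^ k • x‖ := by rw [norm_smul, Real.norm_of_nonneg (pow_nonneg hs k)]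
        _ ≤ ‖S ^ k *ᵥ x‖ := pi_norm_le_norm_of_nonneg_of_le (smul_nonneg (pow_nonneg hs k) hx)
            (pow_smul_le_pow_mulVec hS hs hsx k)
        _ ≤ ‖S ^ k‖ * ‖x‖ := linfty_opNorm_mulVec _ _
    have hmap : (S ^ k).map (algebraMap ℝ ℂ) = S.map (algebraMap ℝ ℂ) ^ k :=
      map_pow (algebraMap ℝ ℂ).mapMatrix S k
    rw [← hmap, norm_map_algebraMap]
    exact le_of_mul_le_mul_right hsk (norm_pos_iff.2 hx0)
  have hgelfand : ENNReal.ofReal s ≤ spectralRadius ℂ (S.map (algebraMap ℝ ℂ)) :=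
    ge_of_tendsto (spectrum.pow_norm_pow_one_div_tendsto_nhds_spectralRadius _) <|
      (eventually_ne_atTop 0).mono fun k hk => ENNReal.ofReal_le_ofReal <|
        calc s = (s ^ k) ^ (1 / (k : ℝ)) := by rw [one_div, Real.pow_rpow_inv_natCast hs hk]
          _ ≤ _ := Real.rpow_le_rpow (pow_nonneg hs k) (hpow k) (by positivity)
  exact (ENNReal.ofReal_le_ofReal_iff (specRad_nonneg S)).1
    (hgelfand.trans (spectralRadius_le_specRad S))

theorem exists_smul_le_mulVec_of_mem_spectrum {S : Matrix m m ℝ} (hS : ∀ i j, 0 ≤ S i j) {μ : ℂ}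
    (hμ : μ ∈ spectrum ℂ (S.map (algebraMap ℝ ℂ))) :
    ∃ x : m → ℝ, 0 ≤ x ∧ x ≠ 0 ∧ ‖μ‖ • x ≤ S *ᵥ x := by
  obtain ⟨v, hv0, hv⟩ := (mem_spectrum_iff_exists_mulVec_eq_smul _ μ).1 hμ
  refine ⟨fun i => ‖v i‖, fun i => norm_nonneg _, ?_, fun i => ?_⟩
  · contrapose! hv0
    ext i
    simpa using congrFun hv0 i
  · calc ‖μ‖ * ‖v i‖ = ‖(S.map (algebraMap ℝ ℂ) *ᵥ v) i‖ := by
          rw [hv, Pi.smul_apply, smul_eq_mul, norm_mul]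
      _ ≤ ∑ j, ‖S.map (algebraMap ℝ ℂ) i j * v j‖ := norm_sum_le _ _
      _ = (S *ᵥ fun i => ‖v i‖) i := by
          simp [mulVec, dotProduct, abs_of_nonneg (hS i _)]

theorem specRad_mono {S S' : Matrix m m ℝ} (hS' : ∀ i j, 0 ≤ S' i j)
    (hle : ∀ i j, S' i j ≤ S i j) : specRad S' ≤ specRad S :=
  specRad_le (specRad_nonneg S) fun μ hμ => by
    obtain ⟨x, hx, hx0, hμx⟩ := exists_smul_le_mulVec_of_mem_spectrum hS' hμ
    exact le_specRad_of_smul_le_mulVec (fun i j => (hS' i j).trans (hle i j)) hx hx0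
      (norm_nonneg μ) (hμx.trans (mulVec_le_mulVec_of_le hle hx))

theorem specRad_le_div_of_one_add_mul_eq {T B : Matrix m m ℝ} (hT : ∀ i j, 0 ≤ T i j)
    (hB : ∀ i j, 0 ≤ B i j) (hBT : (1 + B) * T = B) :
    specRad T ≤ specRad B / (1 + specRad B) := by
  have hb := specRad_nonneg B
  refine specRad_le (by positivity) fun τ hτ => ?_
  obtain ⟨x, hx, hx0, hτx⟩ := exists_smul_le_mulVec_of_mem_spectrum hT hτ
  set t := ‖τ‖
  have key : t • x + t • (B *ᵥ x) ≤ B *ᵥ x :=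
    calc t • x + t • (B *ᵥ x) = t • x + B *ᵥ (t • x) := by rw [mulVec_smul]
      _ ≤ T *ᵥ x + B *ᵥ (T *ᵥ x) := add_le_add hτx (mulVec_mono_of_nonneg hB hτx)
      _ = ((1 + B) * T) *ᵥ x := by rw [← mulVec_mulVec, add_mulVec, one_mulVec]
      _ = B *ᵥ x := by rw [hBT]
  obtain ⟨i, hi⟩ : ∃ i, 0 < x i := by
    by_contra! h
    exact hx0 (le_antisymm h hx)
  have hBx : 0 ≤ B *ᵥ x := by simpa using mulVec_mono_of_nonneg hB hx
  have ht1 : t < 1 := by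
    by_contra! h
    have := key i
    simp only [Pi.add_apply, Pi.smul_apply, smul_eq_mul] at this
    nlinarith [mul_nonneg (sub_nonneg.2 h) (hBx i), mul_le_mul_of_nonneg_right h hi.le]
  have hsub : (t / (1 - t)) • x ≤ B *ᵥ x := fun j => by
    have := key j
    simp only [Pi.add_apply, Pi.smul_apply, smul_eq_mul] at this ⊢
    rw [div_mul_eq_mul_div, div_le_iff₀ (by linarith)]
    linarith
  have := le_specRad_of_smul_le_mulVec hB hx hx0 (div_nonneg (norm_nonneg τ) (by linarith)) hsub
  rw [div_le_iff₀ (by linarith)] at this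
  rw [le_div_iff₀ (by linarith)]
  linarith

theorem div_le_specRad_of_mul_one_add_eq {T B : Matrix m m ℝ} (hTB : T * (1 + B) = B) :
    specRad B / (1 + specRad B) ≤ specRad T := by
  rcases isEmpty_or_nonempty m with hm | hm
  · have hB0 : specRad B ≤ 0 := specRad_le le_rfl fun μ hμ => by
      obtain ⟨v, hv0, -⟩ := (mem_spectrum_iff_exists_mulVec_eq_smul _ μ).1 hμ
      exact absurd (Subsingleton.elim v 0) hv0
    rw [le_antisymm hB0 (specRad_nonneg B), zero_div]
    exact specRad_nonneg T
  obtain ⟨μ, hμ, hμB⟩ := exists_norm_eq_specRad B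
  obtain ⟨v, hv0, hv⟩ := (mem_spectrum_iff_exists_mulVec_eq_smul _ μ).1 hμ
  set f := (algebraMap ℝ ℂ).mapMatrix (m := m)
  change f B *ᵥ v = μ • v at hv
  have hTBc : f T * (1 + f B) = f B := by rw [← map_one f, ← map_add, ← map_mul, hTB]
  have hTv : (1 + μ) • (f T *ᵥ v) = μ • v := by
    rw [← hv, ← hTBc, ← mulVec_mulVec, add_mulVec, one_mulVec, hv, mulVec_add, mulVec_smul,
      add_smul, one_smul]
  have h1μ : 1 + μ ≠ 0 := by
    intro h
    rw [h, zero_smul, eq_comm, smul_eq_zero] at hTv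
    exact hTv.elim (fun hμ0 => by simp [hμ0] at h) hv0
  have hmem : μ / (1 + μ) ∈ spectrum ℂ (T.map (algebraMap ℝ ℂ)) :=
    (mem_spectrum_iff_exists_mulVec_eq_smul _ _).2 ⟨v, hv0, by
      rw [div_eq_inv_mul, mul_smul, ← hTv, smul_smul, inv_mul_cancel₀ h1μ, one_smul]; rfl⟩
  calc specRad B / (1 + specRad B) = ‖μ‖ / (1 + ‖μ‖) := by rw [hμB]
    _ ≤ ‖μ‖ / ‖1 + μ‖ := div_le_div_of_nonneg_left (norm_nonneg μ) (norm_pos_iff.2 h1μ)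
        (by simpa using norm_add_le (1 : ℂ) μ)
    _ = ‖μ / (1 + μ)‖ := (norm_div _ _).symm
    _ ≤ specRad T := norm_le_specRad hmem

theorem stmt7 {n : ℕ} (A M N M' N' : Matrix (Fin n) (Fin n) ℝ)
    (hA : IsUnit A) (hAinv : ∀ i j, 0 ≤ A⁻¹ i j)
    (hMN : A = M - N) (hM : IsUnit M) (hMinv : ∀ i j, 0 ≤ M⁻¹ i j)
    (hN : ∀ i j, 0 ≤ N i j)
    (hMN' : A = M' - N') (hM' : IsUnit M') (hMinv' : ∀ i j, 0 ≤ M'⁻¹ i j)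
    (hN' : ∀ i j, 0 ≤ N' i j)
    (hle : ∀ i j, N' i j ≤ N i j) :
    specRad (M'⁻¹ * N') ≤ specRad (M⁻¹ * N) ∧ specRad (M⁻¹ * N) < 1 := by
  have hB := mul_apply_nonneg hAinv hN
  have hB' := mul_apply_nonneg hAinv hN'
  have hmono : specRad (A⁻¹ * N') ≤ specRad (A⁻¹ * N) := specRad_mono hB' fun i j => by
    simp only [mul_apply]
    exact Finset.sum_le_sum fun k _ => mul_le_mul_of_nonneg_left (hle k j) (hAinv i k)
  have hupper := specRad_le_div_of_one_add_mul_eq (mul_apply_nonneg hMinv hN) hB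
    (one_add_inv_mul_mul_inv_mul hA hM hMN)
  have hupper' := specRad_le_div_of_one_add_mul_eq (mul_apply_nonneg hMinv' hN') hB'
    (one_add_inv_mul_mul_inv_mul hA hM' hMN')
  have hlower := div_le_specRad_of_mul_one_add_eq (inv_mul_mul_one_add_inv_mul hA hM hMN)
  have hb := specRad_nonneg (A⁻¹ * N)
  have hb' := specRad_nonneg (A⁻¹ * N')
  refine ⟨hupper'.trans (le_trans ?_ hlower), hupper.trans_lt ?_⟩
  · rw [div_le_div_iff₀ (by positivity) (by positivity)]
    nlinarith
  · rw [div_lt_one (by positivity)]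
    linarith
end
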